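/- For all integers n ≥ 2, HB_n^{(ν,k)}(x) = −ν(n−1) HB_{n-2}^{(ν,k)}(x) + x · HB_{n-1}^{(ν,k)}(x) + \frac{1}{n} \sum_{l=0}^{n} \binom{n}{l} B_l ( HB_{n-l}^{(ν,k-1)}(x) − HB_{n-l}^{(ν,k)}(x) ), where B_l are the ordinary Bernoulli numbers (with B_1 = -1/2). -/

import Mathlib

open PowerSeries Finset

/-- The power series e^{-t}. -/
noncomputable def expNeg : PowerSeries ℝ := rescale (-1) (PowerSeries.exp ℝ)

/-- Li_k(1-e^{-t})/(1-e^{-t}) = ∑_{m≥0} (1-e^{-t})^m/(m+1)^k as a formal power series. -/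
noncomputable def pbGF (k : ℤ) : PowerSeries ℝ :=
  PowerSeries.mk fun n => ∑ m ∈ Finset.range (n + 1),
    (1 / ((m : ℝ) + 1) ^ k) * PowerSeries.coeff n ((1 - expNeg) ^ m)

/-- The power series e^{-ν t²/2}. -/
noncomputable def hermGF (ν : ℝ) : PowerSeries ℝ :=
  PowerSeries.mk fun n =>
    if Even n then (-ν / 2) ^ (n / 2) / (Nat.factorial (n / 2)) else 0

/-- Hermite and poly-Bernoulli mixed-type polynomials. -/
noncomputable def HB (ν : ℝ) (k : ℤ) (n : ℕ) (x : ℝ) : ℝ :=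
  (Nat.factorial n) *
    PowerSeries.coeff n (hermGF ν * pbGF k * rescale x (PowerSeries.exp ℝ))

/-- Poly-Bernoulli polynomials. -/
noncomputable def pB (k : ℤ) (n : ℕ) (x : ℝ) : ℝ :=
  (Nat.factorial n) * PowerSeries.coeff n (pbGF k * rescale x (PowerSeries.exp ℝ))

/-- Hermite polynomials of order ν. -/
noncomputable def Herm (ν : ℝ) (n : ℕ) (x : ℝ) : ℝ :=
  (Nat.factorial n) * PowerSeries.coeff n (hermGF ν * rescale x (PowerSeries.exp ℝ))

/-- Stirling numbers of the second kind. -/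
def S2 : ℕ → ℕ → ℕ
  | 0, 0 => 1
  | 0, _ + 1 => 0
  | _ + 1, 0 => 0
  | n + 1, m + 1 => (m + 1) * S2 n (m + 1) + S2 n m

/-!
Write `F_k = e^{-νt²/2} P_k(t) e^{xt}` for the generating function of `HB^{(ν,k)}`, where
`P_k(t) = L_k(1 - e^{-t})` with `L_k(z) = Li_k(z)/z = ∑ z^m/(m+1)^k`. The recurrence is the
coefficient of `t^n` in
  `t F_k' = -ν t² F_k + x t F_k + (t/(e^t - 1)) (F_{k-1} - F_k)`.
The first two terms come from differentiating the two exponentials. For the third,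
`z L_k'(z) = L_{k-1}(z) - L_k(z)`, so the chain rule gives `(1 - e^{-t}) P_k' = e^{-t} (P_{k-1} - P_k)`,
and `t / (1 - e^{-t}) = e^t · t/(e^t - 1)` turns this into `t P_k' = (t/(e^t - 1)) (P_{k-1} - P_k)`.
-/

namespace PowerSeries

theorem coeff_X_mul_derivative {R : Type*} [CommSemiring R] (f : R⟦X⟧) (n : ℕ) :
    coeff n (X * d⁄dX R f) = n * coeff n f := by
  cases n with
  | zero => simp
  | succ n => rw [coeff_succ_X_mul, coeff_derivative, mul_comm, Nat.cast_succ]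

theorem derivative_rescale_exp {A : Type*} [CommRing A] [Algebra ℚ A] (a : A) :
    d⁄dX A (rescale a (exp A)) = C a * rescale a (exp A) := by
  ext n
  have h : (1 / (n + 1).factorial : ℚ) * (n + 1) = 1 / n.factorial := by
    rw [Nat.factorial_succ]; push_cast; field_simp
  rw [coeff_derivative, coeff_rescale, coeff_exp, coeff_C_mul, coeff_rescale, coeff_exp, ← h,
    map_mul, pow_succ]
  push_cast
  ring

theorem coeff_subst_eq_sum_range {R : Type*} [CommRing R] {u : R⟦X⟧}
    (hu : constantCoeff u = 0) (f : R⟦X⟧) (n : ℕ) :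
    coeff n (f.subst u) = ∑ m ∈ range (n + 1), coeff m f * coeff n (u ^ m) := by
  rw [coeff_subst' (HasSubst.of_constantCoeff_zero' hu), finsum_eq_sum_of_support_subset _ ?_]
  · rfl
  intro m hm
  rw [coe_range, Set.mem_Iio, Nat.lt_succ_iff]
  by_contra! hnm
  have hlt : (n : ℕ∞) < (u ^ m).order :=
    (Nat.cast_lt.mpr hnm).trans_le (le_order_pow_of_constantCoeff_eq_zero m hu)
  exact hm (by simp only [coeff_of_lt_order n hlt, smul_zero])

theorem coeff_bernoulliPowerSeries_mul {A : Type*} [CommRing A] [Algebra ℚ A] (g : A⟦X⟧) (n : ℕ) :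
    coeff n (bernoulliPowerSeries A * g) =
      ∑ l ∈ range (n + 1), algebraMap ℚ A (bernoulli l / l.factorial) * coeff (n - l) g := by
  rw [coeff_mul, Finset.Nat.sum_antidiagonal_eq_sum_range_succ_mk]
  simp [bernoulliPowerSeries]

end PowerSeries

theorem hermGF_eq_subst (ν : ℝ) :
    hermGF ν = (rescale (-ν / 2) (exp ℝ)).subst (X ^ 2 : ℝ⟦X⟧) := by
  ext n
  rw [coeff_subst_X_pow two_ne_zero, hermGF, coeff_mk, coeff_rescale, coeff_exp]
  simp [even_iff_two_dvd, div_eq_mul_inv]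

theorem derivative_hermGF (ν : ℝ) : d⁄dX ℝ (hermGF ν) = C (-ν) * X * hermGF ν := by
  rw [hermGF_eq_subst, derivative_subst (HasSubst.X_pow two_ne_zero), derivative_rescale_exp,
    subst_mul (HasSubst.X_pow two_ne_zero), subst_C, ← hermGF_eq_subst]
  change C (-ν / 2) * hermGF ν * d⁄dX ℝ (X ^ 2) = _
  have hC : (C (-ν) : ℝ⟦X⟧) = C (-ν / 2) * 2 := by
    rw [← map_ofNat C 2, ← map_mul]; ring_nf
  rw [derivative_pow, derivative_X, hC]
  push_cast
  ring

noncomputable def polylogDivX (k : ℤ) : ℝ⟦X⟧ := mk fun m => 1 / ((m : ℝ) + 1) ^ k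

theorem X_mul_derivative_polylogDivX (k : ℤ) :
    X * d⁄dX ℝ (polylogDivX k) = polylogDivX (k - 1) - polylogDivX k := by
  ext m
  have hm : (m : ℝ) + 1 ≠ 0 := by positivity
  rw [coeff_X_mul_derivative, map_sub, polylogDivX, polylogDivX, coeff_mk, coeff_mk,
    zpow_sub_one₀ hm]
  field_simp
  ring

theorem constantCoeff_one_sub_expNeg : constantCoeff (1 - expNeg) = 0 := by
  rw [map_sub, map_one, ← coeff_zero_eq_constantCoeff_apply, expNeg, coeff_rescale, coeff_exp]
  simp

theorem pbGF_eq_subst (k : ℤ) : pbGF k = (polylogDivX k).subst (1 - expNeg) := by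
  ext n
  simp only [coeff_subst_eq_sum_range constantCoeff_one_sub_expNeg, pbGF, polylogDivX, coeff_mk]

theorem derivative_expNeg : d⁄dX ℝ expNeg = -expNeg := by
  rw [expNeg, derivative_rescale_exp, map_neg, map_one, neg_one_mul]

theorem one_sub_expNeg_mul_derivative_pbGF (k : ℤ) :
    (1 - expNeg) * d⁄dX ℝ (pbGF k) = expNeg * (pbGF (k - 1) - pbGF k) := by
  have hu : HasSubst (1 - expNeg) := HasSubst.of_constantCoeff_zero' constantCoeff_one_sub_expNeg
  have hsubst : (X * d⁄dX ℝ (polylogDivX k)).subst (1 - expNeg) =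
      (polylogDivX (k - 1)).subst (1 - expNeg) - (polylogDivX k).subst (1 - expNeg) := by
    rw [X_mul_derivative_polylogDivX, subst_sub hu]
  rw [subst_mul hu, subst_X hu] at hsubst
  rw [pbGF_eq_subst, pbGF_eq_subst, derivative_subst hu, map_sub, derivative_one,
    derivative_expNeg]
  linear_combination expNeg * hsubst

theorem exp_mul_expNeg : exp ℝ * expNeg = 1 := exp_mul_exp_neg_eq_one

theorem expNeg_ne_zero : expNeg ≠ 0 :=
  right_ne_zero_of_mul_eq_one exp_mul_expNeg

theorem X_mul_derivative_pbGF (k : ℤ) :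
    X * d⁄dX ℝ (pbGF k) = bernoulliPowerSeries ℝ * (pbGF (k - 1) - pbGF k) := by
  have hB : bernoulliPowerSeries ℝ * (1 - expNeg) = X * expNeg := by
    linear_combination expNeg * bernoulliPowerSeries_mul_exp_sub_one ℝ -
      bernoulliPowerSeries ℝ * exp_mul_expNeg
  refine mul_left_cancel₀ expNeg_ne_zero ?_
  linear_combination bernoulliPowerSeries ℝ * one_sub_expNeg_mul_derivative_pbGF k -
    d⁄dX ℝ (pbGF k) * hB

noncomputable def hbGF (ν : ℝ) (k : ℤ) (x : ℝ) : ℝ⟦X⟧ := hermGF ν * pbGF k * rescale x (exp ℝ)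

theorem X_mul_derivative_hbGF (ν : ℝ) (k : ℤ) (x : ℝ) :
    X * d⁄dX ℝ (hbGF ν k x) = C (-ν) * X ^ 2 * hbGF ν k x + C x * X * hbGF ν k x +
      bernoulliPowerSeries ℝ * (hbGF ν (k - 1) x - hbGF ν k x) := by
  simp only [hbGF, Derivation.leibniz, smul_eq_mul, derivative_hermGF, derivative_rescale_exp]
  linear_combination hermGF ν * rescale x (exp ℝ) * X_mul_derivative_pbGF k

theorem coeff_hbGF (ν : ℝ) (k : ℤ) (x : ℝ) (n : ℕ) :
    coeff n (hbGF ν k x) = HB ν k n x / n.factorial := by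
  rw [HB, hbGF, mul_div_cancel_left₀ _ (by positivity)]

theorem coeff_hbGF_recurrence (ν : ℝ) (k : ℤ) (x : ℝ) (m : ℕ) :
    (m + 2 : ℕ) * coeff (m + 2) (hbGF ν k x) =
      -ν * coeff m (hbGF ν k x) + x * coeff (m + 1) (hbGF ν k x) +
      ∑ l ∈ range (m + 2 + 1), bernoulli l / l.factorial *
        (coeff (m + 2 - l) (hbGF ν (k - 1) x) - coeff (m + 2 - l) (hbGF ν k x)) := by
  have h := congrArg (coeff (m + 2)) (X_mul_derivative_hbGF ν k x)
  rw [coeff_X_mul_derivative, map_add, map_add, mul_assoc, mul_assoc, coeff_C_mul, coeff_C_mul,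
    coeff_X_pow_mul, coeff_succ_X_mul, coeff_bernoulliPowerSeries_mul] at h
  rw [h]
  simp

theorem sum_div_factorial_mul_div_factorial {K : Type*} [Field K] [CharZero K] (n : ℕ)
    (b f : ℕ → K) :
    ∑ l ∈ range (n + 1), b l / l.factorial * (f (n - l) / (n - l).factorial) =
      (∑ l ∈ range (n + 1), (n.choose l : K) * b l * f (n - l)) / n.factorial := by
  rw [sum_div]
  refine sum_congr rfl fun l hl => ?_
  rw [Nat.cast_choose K (Nat.lt_succ_iff.mp (mem_range.mp hl))]
  have : (n.factorial : K) ≠ 0 := Nat.cast_ne_zero.mpr n.factorial_ne_zero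
  field_simp

theorem HB_recurrence'_general (ν : ℝ) (k : ℤ) (n : ℕ) (hn : 2 ≤ n) (x : ℝ) :
    HB ν k n x = -ν * ((n : ℝ) - 1) * HB ν k (n - 2) x + x * HB ν k (n - 1) x +
      (1 / (n : ℝ)) * ∑ l ∈ Finset.range (n + 1),
        (n.choose l : ℝ) * (bernoulli l : ℝ) *
          (HB ν (k - 1) (n - l) x - HB ν k (n - l) x) := by
  obtain ⟨m, rfl⟩ : ∃ m, n = m + 2 := ⟨n - 2, by omega⟩
  have h := coeff_hbGF_recurrence ν k x m
  simp only [coeff_hbGF, ← sub_div] at h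
  rw [sum_div_factorial_mul_div_factorial (m + 2) (fun l => (bernoulli l : ℝ))
    (fun j => HB ν (k - 1) j x - HB ν k j x)] at h
  rw [show m + 2 - 2 = m from rfl, show m + 2 - 1 = m + 1 from rfl]
  rw [Nat.factorial_succ (m + 1), Nat.factorial_succ m] at h
  push_cast at h ⊢
  field_simp at h ⊢
  linear_combination h

theorem HB_recurrence' (ν : ℝ) (hν : ν ≠ 0) (k : ℤ) (n : ℕ) (hn : 2 ≤ n) (x : ℝ) :
    HB ν k n x = -ν * ((n : ℝ) - 1) * HB ν k (n - 2) x + x * HB ν k (n - 1) x +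
      (1 / (n : ℝ)) * ∑ l ∈ Finset.range (n + 1),
        (n.choose l : ℝ) * (bernoulli l : ℝ) *
          (HB ν (k - 1) (n - l) x - HB ν k (n - l) x) :=
  HB_recurrence'_general ν k n hn x
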